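/- arXiv:2102.03153 — 4 statements merged into one kernel-verified Lean document; each statement's English description precedes it below -/
import Mathlib

section
/- Let X be a 3×3 complex matrix with columns x₀,x₁,x₂ ∈ ℂ³, let ⟨·,·⟩ be the standard complex bilinear form on ℂ³ (no conjugation), let L = {v ∈ ℂ³ : ⟨v,v⟩ = 0}, and let W = XᵀX. Then ker(Xᵀ) ∩ L = {0} if and only if rank W ≥ 2. -/
/-!
For the bilinear form `⟨·,·⟩`, `ker Xᵀ` is the orthogonal of `range X`, and
`rank (XᵀX) = rank X - dim (range X ∩ ker Xᵀ)`; every vector of that intersection is isotropic.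
Over `ℂ` every plane contains an isotropic line, so if `ker Xᵀ ∩ L = {0}` then `dim ker Xᵀ ≤ 1`,
the intersection is trivial and `rank W = rank X ≥ 2`. Conversely, if `ker Xᵀ` contains an
isotropic `v ≠ 0` and `rank X = 2`, then `range X = v^⊥ ∋ v`, so `rank W ≤ 1`.
-/

open Matrix Module Polynomial

theorem LinearMap.BilinForm.exists_ne_zero_apply_self_eq_zero {K V : Type*} [Field K]
    [IsAlgClosed K] [AddCommGroup V] [Module K V] (B : LinearMap.BilinForm K V)
    (h : 1 < finrank K V) : ∃ v ≠ 0, B v v = 0 := by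
  have : FiniteDimensional K V := Module.finite_of_finrank_pos (by omega)
  obtain ⟨a, ha⟩ := finrank_pos_iff_exists_ne_zero.mp (by omega : 0 < finrank K V)
  obtain ⟨c, hac⟩ := exists_linearIndependent_pair_of_one_lt_finrank h ha
  by_cases hc : B c c = 0
  · exact ⟨c, by simpa using hac.ne_zero 1, hc⟩
  -- `B (a + t • c) (a + t • c)` is this quadratic polynomial evaluated at `t`.
  obtain ⟨t, ht⟩ := IsAlgClosed.exists_root
    (C (B c c) * X ^ 2 + C (B a c + B c a) * X + C (B a a)) (by rw [degree_quadratic hc]; decide)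
  refine ⟨a + t • c, fun h0 => ?_, ?_⟩
  · exact one_ne_zero (LinearIndependent.pair_iff.mp hac 1 t (by simpa using h0)).1
  · simp only [IsRoot, eval_add, eval_mul, eval_C, eval_pow, eval_X] at ht
    simp only [map_add, map_smul, LinearMap.add_apply, LinearMap.smul_apply, smul_eq_mul]
    linear_combination ht

namespace Matrix

variable {K m n : Type*} [Field K] [Fintype m]

theorem rank_add_finrank_ker_mulVecLin (A : Matrix n m K) :
    A.rank + finrank K (LinearMap.ker A.mulVecLin) = Fintype.card m := by
  rw [rank, LinearMap.finrank_range_add_finrank_ker, finrank_fintype_fun_eq_card]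

theorem rank_transpose_mul_self_add_finrank_inf [Fintype n] (X : Matrix m n K) :
    (Xᵀ * X).rank + finrank K ↥(LinearMap.range X.mulVecLin ⊓ LinearMap.ker Xᵀ.mulVecLin) =
      X.rank := by
  have := (Xᵀ.mulVecLin ∘ₗ (LinearMap.range X.mulVecLin).subtype).finrank_range_add_finrank_ker
  rwa [LinearMap.range_comp, Submodule.range_subtype, ← LinearMap.range_comp, ← mulVecLin_mul,
    LinearMap.ker_comp, ← Submodule.finrank_map_subtype_eq, Submodule.map_comap_subtype] at this

theorem range_mulVecLin_le_ker_dotProductBilin [Fintype n] (X : Matrix m n K) {v : m → K}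
    (hv : Xᵀ *ᵥ v = 0) : LinearMap.range X.mulVecLin ≤ LinearMap.ker (dotProductBilin K K v) := by
  rintro _ ⟨u, rfl⟩
  simp [dotProduct_mulVec, ← mulVec_transpose, hv]

theorem finrank_ker_dotProductBilin_add_one {v : m → K} (hv : v ≠ 0) :
    finrank K (LinearMap.ker (dotProductBilin K K v)) + 1 = Fintype.card m := by
  rw [Module.Dual.finrank_ker_add_one_of_ne_zero, finrank_fintype_fun_eq_card]
  contrapose! hv
  exact dotProduct_eq_zero_iff.mp fun w => LinearMap.congr_fun hv w

theorem mem_range_mulVecLin_of_dotProduct_self_eq_zero [Fintype n] (X : Matrix m n K)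
    {v : m → K} (hv : v ≠ 0) (hXv : Xᵀ *ᵥ v = 0) (hvv : v ⬝ᵥ v = 0)
    (hrank : X.rank + 1 = Fintype.card m) : v ∈ LinearMap.range X.mulVecLin := by
  have hle := X.range_mulVecLin_le_ker_dotProductBilin hXv
  have hdim := finrank_ker_dotProductBilin_add_one hv
  rw [Submodule.eq_of_le_of_finrank_eq hle (by rw [← rank]; omega)]
  exact hvv

end Matrix

theorem stmt0 (X : Matrix (Fin 3) (Fin 3) ℂ) :
    {v : Fin 3 → ℂ | Xᵀ.mulVec v = 0 ∧ v ⬝ᵥ v = 0} = {0} ↔ 2 ≤ (Xᵀ * X).rank := by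
  have hW := X.rank_transpose_mul_self_add_finrank_inf
  have hXt := Xᵀ.rank_add_finrank_ker_mulVecLin
  rw [rank_transpose, Fintype.card_fin] at hXt
  constructor
  · intro h
    have hiso {v} (hXv : Xᵀ *ᵥ v = 0) (hvv : v ⬝ᵥ v = 0) : v = 0 := h.subset ⟨hXv, hvv⟩
    have hK : finrank ℂ (LinearMap.ker Xᵀ.mulVecLin) ≤ 1 := by
      by_contra! hK
      obtain ⟨v, hv0, hvv⟩ := (LinearMap.BilinForm.restrict (dotProductBilin ℂ ℂ)
        _).exists_ne_zero_apply_self_eq_zero hK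
      exact hv0 (Subtype.ext (hiso v.2 hvv))
    have hRK : LinearMap.range X.mulVecLin ⊓ LinearMap.ker Xᵀ.mulVecLin = ⊥ := eq_bot_iff.mpr
      fun v ⟨hvR, hXv⟩ => hiso hXv (X.range_mulVecLin_le_ker_dotProductBilin hXv hvR)
    rw [hRK, finrank_bot] at hW
    omega
  · intro h
    refine Set.eq_singleton_iff_unique_mem.mpr ⟨⟨mulVec_zero _, zero_dotProduct _⟩, ?_⟩
    rintro v ⟨hXv, hvv⟩
    by_contra hv0
    have hK : 1 ≤ finrank ℂ (LinearMap.ker Xᵀ.mulVecLin) :=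
      Submodule.one_le_finrank_iff.mpr ((Submodule.ne_bot_iff _).mpr ⟨v, hXv, hv0⟩)
    have hX : 2 ≤ X.rank := h.trans (rank_mul_le_right _ _)
    have hvR := X.mem_range_mulVecLin_of_dotProduct_self_eq_zero hv0 hXv hvv
      (by rw [Fintype.card_fin]; omega)
    have hRK : 1 ≤ finrank ℂ ↥(LinearMap.range X.mulVecLin ⊓ LinearMap.ker Xᵀ.mulVecLin) :=
      Submodule.one_le_finrank_iff.mpr ((Submodule.ne_bot_iff _).mpr ⟨v, ⟨hvR, hXv⟩, hv0⟩)
    omega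
end

section
/- Let X, Y be 3×3 complex matrices with XᵀX = YᵀY, det X = det Y, and suppose ker(Xᵀ) ∩ L = {0}, where L = {v ∈ ℂ³ : ⟨v,v⟩ = 0} for the standard complex bilinear form. Then there exists a unique S ∈ SO(3,ℂ) such that Y = S·X. -/
/-!
For invertible `X` the matrix `S = Y X⁻¹` is forced. For singular `X`, anisotropy makes `ker Xᵀ` a
line `K ∙ u` with `u ⬝ᵥ u = 1` and gives `ker (Xᵀ X) = ker X`; through the common Gram matrix this
passes to `Y`, whose `ker Yᵀ` is then spanned by some `u'` with `u' ⬝ᵥ u' = 1`. Adding `u mᵀ` to `X`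
and `± u' mᵀ` to `Y`, with `m` not orthogonal to `ker X`, adds `m mᵀ` to both Gram matrices and
produces invertible matrices of equal determinant. The invertible case then gives `S`, which maps
`u` to `± u'` and hence `X` to `Y`. If `R ∈ SO` fixes `X`, then `R u = ± u`, and the sign `-1`
would flip the sign of `det (X + u mᵀ) ≠ 0`.
-/

open Matrix

namespace Matrix

variable {n : Type*} [Fintype n]

section Anisotropic

variable {K : Type*} [Field K]

def IsAnisotropic (V : Submodule K (n → K)) : Prop :=
  ∀ v ∈ V, v ⬝ᵥ v = 0 → v = 0

namespace IsAnisotropic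

variable [IsAlgClosed K] {V : Submodule K (n → K)}

/-- For `b ∈ V`, the vector `e := b - ((a ⬝ᵥ b) / (a ⬝ᵥ a)) • a` is orthogonal to `a`; if it were
nonzero, `a + t • e` with `t² = -(a ⬝ᵥ a) / (e ⬝ᵥ e)` would be a nonzero isotropic vector. -/
theorem eq_span_singleton (hV : IsAnisotropic V) {a : n → K} (ha : a ∈ V)
    (ha0 : a ≠ 0) : V = K ∙ a := by
  refine le_antisymm (fun b hb => ?_) ((Submodule.span_singleton_le_iff_mem _ _).mpr ha)
  have haa : a ⬝ᵥ a ≠ 0 := fun h => ha0 (hV a ha h)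
  set e := b - (a ⬝ᵥ b / a ⬝ᵥ a) • a with he_def
  have he : e ∈ V := V.sub_mem hb (V.smul_mem _ ha)
  have hae : a ⬝ᵥ e = 0 := by
    rw [he_def, dotProduct_sub, dotProduct_smul, smul_eq_mul, div_mul_cancel₀ _ haa, sub_self]
  suffices e = 0 from Submodule.mem_span_singleton.mpr ⟨_, (sub_eq_zero.mp this).symm⟩
  by_contra he0
  have hee : e ⬝ᵥ e ≠ 0 := fun h => he0 (hV e he h)
  obtain ⟨t, ht⟩ := IsAlgClosed.exists_pow_nat_eq (-(a ⬝ᵥ a) / (e ⬝ᵥ e)) two_pos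
  have hiso : a + t • e = 0 := by
    refine hV _ (V.add_mem ha (V.smul_mem t he)) ?_
    simp only [dotProduct_add, add_dotProduct, dotProduct_smul, smul_dotProduct, smul_eq_mul,
      hae, dotProduct_comm e a]
    have ht' : t ^ 2 * (e ⬝ᵥ e) = -(a ⬝ᵥ a) := by rw [ht, div_mul_cancel₀ _ hee]
    linear_combination ht'
  have ht0 : t = 0 := by
    have h := congrArg (e ⬝ᵥ ·) hiso
    simp only [dotProduct_add, dotProduct_smul, smul_eq_mul, dotProduct_comm e a, hae,
      dotProduct_zero, zero_add, mul_eq_zero] at h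
    exact h.resolve_right hee
  exact ha0 (by simpa [ht0] using hiso)

theorem exists_dotProduct_self_eq_one (hV : IsAnisotropic V) (hV0 : V ≠ ⊥) :
    ∃ u ∈ V, u ⬝ᵥ u = 1 ∧ V = K ∙ u := by
  obtain ⟨a, ha, ha0⟩ := (Submodule.ne_bot_iff _).mp hV0
  have haa : a ⬝ᵥ a ≠ 0 := fun h => ha0 (hV a ha h)
  obtain ⟨s, hs⟩ := IsAlgClosed.exists_pow_nat_eq (a ⬝ᵥ a) two_pos
  have hs0 : s ≠ 0 := by rintro rfl; exact haa (by rw [← hs]; ring)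
  refine ⟨s⁻¹ • a, V.smul_mem _ ha, ?_, hV.eq_span_singleton (V.smul_mem _ ha)
    (smul_ne_zero (inv_ne_zero hs0) ha0)⟩
  rw [smul_dotProduct, dotProduct_smul, ← hs, smul_eq_mul, smul_eq_mul]
  field_simp

theorem finrank_le_one (hV : IsAnisotropic V) : Module.finrank K V ≤ 1 := by
  rcases eq_or_ne V ⊥ with rfl | hV0
  · simp
  obtain ⟨u, -, -, hVu⟩ := hV.exists_dotProduct_self_eq_one hV0
  rw [hVu]
  exact (finrank_span_le_card {u}).trans (by simp)

end IsAnisotropic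

theorem finrank_ker_mulVecLin_transpose (A : Matrix n n K) :
    Module.finrank K (LinearMap.ker Aᵀ.mulVecLin) =
      Module.finrank K (LinearMap.ker A.mulVecLin) := by
  have h := LinearMap.finrank_range_add_finrank_ker A.mulVecLin
  have hT := LinearMap.finrank_range_add_finrank_ker Aᵀ.mulVecLin
  have hrank := A.rank_transpose
  rw [rank, rank] at hrank
  omega

theorem ker_mulVecLin_transpose_mul_self_of_isAnisotropic {A : Matrix n n K}
    (hA : IsAnisotropic (LinearMap.ker Aᵀ.mulVecLin)) :
    LinearMap.ker (Aᵀ * A).mulVecLin = LinearMap.ker A.mulVecLin := by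
  ext v
  simp only [LinearMap.mem_ker, mulVecLin_apply, ← mulVec_mulVec]
  refine ⟨fun h => hA _ h ?_, fun h => by rw [h, mulVec_zero]⟩
  rw [dotProduct_mulVec, ← mulVec_transpose, h, zero_dotProduct]

/-- If `v ∈ ker Aᵀ` were isotropic, then `v ∉ range A` and `range A ⊔ K ∙ v` would be everything,
yet orthogonal to `v`. -/
theorem isAnisotropic_ker_transpose {A : Matrix n n K}
    (hA : LinearMap.ker (Aᵀ * A).mulVecLin = LinearMap.ker A.mulVecLin)
    (hk : Module.finrank K (LinearMap.ker A.mulVecLin) ≤ 1) :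
    IsAnisotropic (LinearMap.ker Aᵀ.mulVecLin) := by
  intro v hv hvv
  rw [LinearMap.mem_ker, mulVecLin_apply] at hv
  by_contra hv0
  have hrank := LinearMap.finrank_range_add_finrank_ker A.mulVecLin
  set V := LinearMap.range A.mulVecLin
  have hvV : v ∉ V := by
    rintro ⟨x, rfl⟩
    have hx : x ∈ LinearMap.ker (Aᵀ * A).mulVecLin := by
      simpa only [LinearMap.mem_ker, mulVecLin_apply, ← mulVec_mulVec] using hv
    rw [hA] at hx
    exact hv0 hx
  have htop : V ⊔ K ∙ v = ⊤ := by
    have hlt := Submodule.finrank_lt_finrank_of_lt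
      (left_lt_sup.mpr ((Submodule.span_singleton_le_iff_mem v V).not.mpr hvV))
    have hle := Submodule.finrank_le (V ⊔ K ∙ v)
    simp only [Module.finrank_fintype_fun_eq_card] at hle hrank
    exact Submodule.eq_top_of_finrank_eq (by simp only [Module.finrank_fintype_fun_eq_card]; omega)
  refine hv0 (dotProduct_eq_zero v fun x => ?_)
  obtain ⟨_, ⟨y, rfl⟩, _, hz, rfl⟩ :=
    Submodule.mem_sup.mp (htop ▸ Submodule.mem_top : x ∈ V ⊔ K ∙ v)
  obtain ⟨c, rfl⟩ := Submodule.mem_span_singleton.mp hz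
  rw [dotProduct_add, dotProduct_smul, hvv, smul_zero, add_zero, mulVecLin_apply,
    dotProduct_mulVec, ← mulVec_transpose, hv, zero_dotProduct]

theorem finrank_ker_mulVecLin_le_one [IsAlgClosed K] {A : Matrix n n K}
    (hA : IsAnisotropic (LinearMap.ker Aᵀ.mulVecLin)) :
    Module.finrank K (LinearMap.ker A.mulVecLin) ≤ 1 :=
  finrank_ker_mulVecLin_transpose A ▸ hA.finrank_le_one

end Anisotropic

section RankOnePerturbation

variable {R : Type*} [CommRing R] {A : Matrix n n R} {w : n → R} (m : n → R)

theorem transpose_add_vecMulVec_mulVec (hw : Aᵀ *ᵥ w = 0) (hww : w ⬝ᵥ w = 1) :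
    (A + vecMulVec w m)ᵀ *ᵥ w = m := by
  rw [transpose_add, transpose_vecMulVec, add_mulVec, hw, vecMulVec_mulVec, hww]
  simp

theorem transpose_mul_self_add_vecMulVec (hw : Aᵀ *ᵥ w = 0) (hww : w ⬝ᵥ w = 1) :
    (A + vecMulVec w m)ᵀ * (A + vecMulVec w m) = Aᵀ * A + vecMulVec m m := by
  have hwA : w ᵥ* A = 0 := by rw [← mulVec_transpose, hw]
  rw [transpose_add, transpose_vecMulVec, Matrix.add_mul, Matrix.mul_add, Matrix.mul_add,
    mul_vecMulVec, hw, vecMulVec_mul, hwA, vecMulVec_mul_vecMulVec, hww]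
  simp

/-- Reflecting in the hyperplane `w⊥` fixes `A` and negates `w`. -/
theorem det_sub_vecMulVec [DecidableEq n] (hw : Aᵀ *ᵥ w = 0) (hww : w ⬝ᵥ w = 1) :
    (A - vecMulVec w m).det = -(A + vecMulVec w m).det := by
  have hH : (1 + vecMulVec (-2 • w) w) * (A + vecMulVec w m) = A - vecMulVec w m := by
    rw [Matrix.add_mul, Matrix.one_mul, vecMulVec_mul, ← mulVec_transpose,
      transpose_add_vecMulVec_mulVec m hw hww, smul_vecMulVec]
    module
  have hdetH : (1 + vecMulVec (-2 • w) w).det = -1 := by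
    rw [vecMulVec_eq Unit, det_one_add_replicateCol_mul_replicateRow, dotProduct_smul, hww]
    norm_num
  rw [← hH, det_mul, hdetH, neg_one_mul]

end RankOnePerturbation

variable [DecidableEq n]

section CommRing

variable {R : Type*} [CommRing R]

/-- Orthogonality for the bilinear form `⬝ᵥ`, i.e. with `ᵀ` rather than `star`; over `ℂ` this is
not Mathlib's `specialOrthogonalGroup`. -/
def IsSpecialOrthogonal (S : Matrix n n R) : Prop :=
  Sᵀ * S = 1 ∧ S.det = 1

namespace IsSpecialOrthogonal

variable {S T : Matrix n n R}

theorem mul_transpose_self (hS : IsSpecialOrthogonal S) : S * Sᵀ = 1 :=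
  mul_eq_one_comm.mp hS.1

theorem transpose_mul (hS : IsSpecialOrthogonal S) (hT : IsSpecialOrthogonal T) :
    IsSpecialOrthogonal (Sᵀ * T) := by
  refine ⟨?_, by rw [det_mul, det_transpose, hS.2, hT.2, one_mul]⟩
  rw [Matrix.transpose_mul, transpose_transpose, Matrix.mul_assoc, ← Matrix.mul_assoc S,
    hS.mul_transpose_self, Matrix.one_mul, hT.1]

theorem dotProduct_mulVec (hS : IsSpecialOrthogonal S) (v w : n → R) :
    S *ᵥ v ⬝ᵥ S *ᵥ w = v ⬝ᵥ w := by
  rw [Matrix.dotProduct_mulVec, ← mulVec_transpose, mulVec_mulVec, hS.1, one_mulVec]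

end IsSpecialOrthogonal

theorem existsUnique_isSpecialOrthogonal_of_isUnit_det {X Y : Matrix n n R} (hX : IsUnit X.det)
    (hW : Xᵀ * X = Yᵀ * Y) (hdet : X.det = Y.det) :
    ∃! S : Matrix n n R, IsSpecialOrthogonal S ∧ Y = S * X := by
  have hXT : IsUnit Xᵀ.det := by rwa [det_transpose]
  refine ⟨Y * X⁻¹, ⟨⟨?_, ?_⟩, ?_⟩, fun T ⟨_, hT⟩ => ?_⟩
  · calc (Y * X⁻¹)ᵀ * (Y * X⁻¹) = Xᵀ⁻¹ * (Yᵀ * Y) * X⁻¹ := by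
          rw [Matrix.transpose_mul, transpose_nonsing_inv]; simp only [Matrix.mul_assoc]
      _ = 1 := by
          rw [← hW, ← Matrix.mul_assoc, nonsing_inv_mul _ hXT, Matrix.one_mul,
            mul_nonsing_inv _ hX]
  · rw [det_mul, det_nonsing_inv, ← hdet, Ring.mul_inverse_cancel _ hX]
  · rw [Matrix.mul_assoc, nonsing_inv_mul _ hX, Matrix.mul_one]
  · rw [hT, Matrix.mul_assoc, mul_nonsing_inv _ hX, Matrix.mul_one]

theorem exists_isSpecialOrthogonal_of_add_vecMulVec {X Y : Matrix n n R} {u u' m : n → R}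
    (hW : Xᵀ * X = Yᵀ * Y) (hu : Xᵀ *ᵥ u = 0) (huu : u ⬝ᵥ u = 1) (hu' : Yᵀ *ᵥ u' = 0)
    (hu'u' : u' ⬝ᵥ u' = 1) (hX₁ : IsUnit (X + vecMulVec u m).det)
    (hdet : (X + vecMulVec u m).det = (Y + vecMulVec u' m).det) :
    ∃ S : Matrix n n R, IsSpecialOrthogonal S ∧ Y = S * X := by
  obtain ⟨S, ⟨hS, hSX⟩, -⟩ := existsUnique_isSpecialOrthogonal_of_isUnit_det hX₁
    (by rw [transpose_mul_self_add_vecMulVec m hu huu,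
      transpose_mul_self_add_vecMulVec m hu' hu'u', hW]) hdet
  have hSu : S *ᵥ u = u' := by
    have hSTu' : Sᵀ *ᵥ u' = u := by
      refine mulVec_injective_of_isUnit
        ((isUnit_transpose _).mpr ((isUnit_iff_isUnit_det _).mpr hX₁)) ?_
      rw [mulVec_mulVec, ← Matrix.transpose_mul, ← hSX, transpose_add_vecMulVec_mulVec m hu' hu'u',
        transpose_add_vecMulVec_mulVec m hu huu]
    rw [← hSTu', mulVec_mulVec, hS.mul_transpose_self, one_mulVec]
  refine ⟨S, hS, add_right_cancel (b := vecMulVec u' m) ?_⟩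
  rw [hSX, Matrix.mul_add, mul_vecMulVec, hSu]

end CommRing

section Field

variable {K : Type*} [Field K]

theorem ker_mulVecLin_ne_bot_iff {A : Matrix n n K} :
    LinearMap.ker A.mulVecLin ≠ ⊥ ↔ A.det = 0 := by
  simp [Submodule.ne_bot_iff, ← exists_mulVec_eq_zero_iff, and_comm]

theorem isAnisotropic_ker_transpose_of_transpose_mul_self_eq [IsAlgClosed K] {X Y : Matrix n n K}
    (hX : IsAnisotropic (LinearMap.ker Xᵀ.mulVecLin)) (hW : Xᵀ * X = Yᵀ * Y) (hY : Y.det = 0) :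
    IsAnisotropic (LinearMap.ker Yᵀ.mulVecLin) := by
  have hWX := ker_mulVecLin_transpose_mul_self_of_isAnisotropic hX
  have hkX := finrank_ker_mulVecLin_le_one hX
  have hYX : LinearMap.ker Y.mulVecLin = LinearMap.ker X.mulVecLin := by
    refine Submodule.eq_of_le_of_finrank_le ?_
      (hkX.trans (Submodule.one_le_finrank_iff.mpr (ker_mulVecLin_ne_bot_iff.mpr hY)))
    rw [← hWX, hW, mulVecLin_mul]
    exact LinearMap.ker_le_ker_comp _ _
  exact isAnisotropic_ker_transpose (by rw [← hW, hWX, hYX]) (hYX ▸ hkX)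

theorem det_add_vecMulVec_ne_zero {A : Matrix n n K} {w ν m : n → K} (hw : Aᵀ *ᵥ w = 0)
    (hww : w ⬝ᵥ w = 1) (hker : LinearMap.ker A.mulVecLin ≤ K ∙ ν) (hm : m ⬝ᵥ ν ≠ 0) :
    (A + vecMulVec w m).det ≠ 0 := by
  intro hdet
  obtain ⟨v, hv0, hv⟩ := exists_mulVec_eq_zero_iff.mpr hdet
  rw [add_mulVec, vecMulVec_mulVec] at hv
  have hmv : m ⬝ᵥ v = 0 := by
    have h := congrArg (w ⬝ᵥ ·) hv
    simpa [dotProduct_mulVec, ← mulVec_transpose, hw, hww] using h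
  obtain ⟨c, rfl⟩ := Submodule.mem_span_singleton.mp
    (hker (by simpa [hmv] using hv : v ∈ LinearMap.ker A.mulVecLin))
  rw [dotProduct_smul, smul_eq_mul, mul_eq_zero] at hmv
  exact hv0 (by rw [hmv.resolve_right hm, zero_smul])

theorem exists_det_add_vecMulVec_eq {X Y : Matrix n n K} {u u' : n → K} (m : n → K)
    (hW : Xᵀ * X = Yᵀ * Y) (hu : Xᵀ *ᵥ u = 0) (huu : u ⬝ᵥ u = 1) (hu' : Yᵀ *ᵥ u' = 0)
    (hu'u' : u' ⬝ᵥ u' = 1) :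
    ∃ u'', Yᵀ *ᵥ u'' = 0 ∧ u'' ⬝ᵥ u'' = 1 ∧
      (X + vecMulVec u m).det = (Y + vecMulVec u'' m).det := by
  have hsq : (X + vecMulVec u m).det ^ 2 = (Y + vecMulVec u' m).det ^ 2 := by
    have h := congrArg det (show (X + vecMulVec u m)ᵀ * (X + vecMulVec u m) =
        (Y + vecMulVec u' m)ᵀ * (Y + vecMulVec u' m) by
      rw [transpose_mul_self_add_vecMulVec m hu huu,
        transpose_mul_self_add_vecMulVec m hu' hu'u', hW])
    rwa [det_mul, det_mul, det_transpose, det_transpose, ← sq, ← sq] at h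
  rcases sq_eq_sq_iff_eq_or_eq_neg.mp hsq with h | h
  · exact ⟨u', hu', hu'u', h⟩
  · refine ⟨-u', by rw [mulVec_neg, hu', neg_zero],
      by rw [neg_dotProduct, dotProduct_neg, neg_neg, hu'u'], ?_⟩
    rw [h, neg_vecMulVec, ← sub_eq_add_neg, det_sub_vecMulVec m hu' hu'u']

namespace IsSpecialOrthogonal

variable [NeZero (2 : K)] {R S T X : Matrix n n K} {u m : n → K}

theorem eq_one_of_mul_eq_self (hR : IsSpecialOrthogonal R) (hRX : R * X = X)
    (hu : LinearMap.ker Xᵀ.mulVecLin = K ∙ u) (huu : u ⬝ᵥ u = 1)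
    (hX₁ : (X + vecMulVec u m).det ≠ 0) : R = 1 := by
  have hXu : Xᵀ *ᵥ u = 0 := (hu ▸ Submodule.mem_span_singleton_self u :
    u ∈ LinearMap.ker Xᵀ.mulVecLin)
  have hXR : Xᵀ * R = Xᵀ := by
    calc Xᵀ * R = (R * X)ᵀ * R := by rw [hRX]
      _ = Xᵀ := by rw [Matrix.transpose_mul, Matrix.mul_assoc, hR.1, Matrix.mul_one]
  obtain ⟨c, hc⟩ : ∃ c : K, c • u = R *ᵥ u := by
    rw [← Submodule.mem_span_singleton, ← hu, LinearMap.mem_ker, mulVecLin_apply, mulVec_mulVec,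
      hXR, hXu]
  have hc2 : c * c = 1 := by
    simpa [← hc, huu] using hR.dotProduct_mulVec u u
  have hRX₁ : R * (X + vecMulVec u m) = X + c • vecMulVec u m := by
    rw [Matrix.mul_add, hRX, mul_vecMulVec, ← hc, smul_vecMulVec]
  rcases mul_self_eq_one_iff.mp hc2 with rfl | rfl
  · rw [one_smul] at hRX₁
    exact (IsUnit.mul_eq_right ((isUnit_iff_isUnit_det _).mpr hX₁.isUnit)).mp hRX₁
  · refine absurd ?_ hX₁
    have h := congrArg det hRX₁
    rw [det_mul, hR.2, one_mul, neg_one_smul, ← sub_eq_add_neg, det_sub_vecMulVec m hXu huu] at h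
    exact ((mul_eq_zero.mp (by linear_combination h : (2 : K) * _ = 0)).resolve_left
      two_ne_zero)

theorem eq_of_mul_eq_mul (hS : IsSpecialOrthogonal S) (hT : IsSpecialOrthogonal T)
    (hST : S * X = T * X) (hu : LinearMap.ker Xᵀ.mulVecLin = K ∙ u) (huu : u ⬝ᵥ u = 1)
    (hX₁ : (X + vecMulVec u m).det ≠ 0) : S = T := by
  have hR := (hS.transpose_mul hT).eq_one_of_mul_eq_self
    (by rw [Matrix.mul_assoc, ← hST, ← Matrix.mul_assoc, hS.1, Matrix.one_mul]) hu huu hX₁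
  calc S = S * (Sᵀ * T) := by rw [hR, Matrix.mul_one]
    _ = T := by rw [← Matrix.mul_assoc, hS.mul_transpose_self, Matrix.one_mul]

end IsSpecialOrthogonal

theorem existsUnique_isSpecialOrthogonal_of_det_eq_zero [IsAlgClosed K] [NeZero (2 : K)]
    {X Y : Matrix n n K} (hX : IsAnisotropic (LinearMap.ker Xᵀ.mulVecLin))
    (hW : Xᵀ * X = Yᵀ * Y) (hdetX : X.det = 0) (hdetY : Y.det = 0) :
    ∃! S : Matrix n n K, IsSpecialOrthogonal S ∧ Y = S * X := by
  obtain ⟨u, hu, huu, hkerXT⟩ :=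
    hX.exists_dotProduct_self_eq_one (ker_mulVecLin_ne_bot_iff.mpr (by rwa [det_transpose]))
  obtain ⟨u', hu', hu'u', -⟩ := (isAnisotropic_ker_transpose_of_transpose_mul_self_eq hX hW
    hdetY).exists_dotProduct_self_eq_one (ker_mulVecLin_ne_bot_iff.mpr (by rwa [det_transpose]))
  have hXP : (LinearMap.ker X.mulVecLin).IsPrincipal :=
    (Submodule.finrank_le_one_iff_isPrincipal _).mp (finrank_ker_mulVecLin_le_one hX)
  obtain ⟨⟨ν, hkerX⟩⟩ := hXP
  obtain ⟨m, hm⟩ : ∃ m, m ⬝ᵥ ν ≠ 0 := by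
    by_contra! h
    have hν : ν = 0 := dotProduct_eq_zero ν fun m => by rw [dotProduct_comm, h m]
    exact ker_mulVecLin_ne_bot_iff.mpr hdetX (by rw [hkerX, hν, Submodule.span_singleton_eq_bot])
  have hX₁ := det_add_vecMulVec_ne_zero hu huu hkerX.le hm
  obtain ⟨u'', hu'', hu''u'', hdet₁⟩ := exists_det_add_vecMulVec_eq m hW hu huu hu' hu'u'
  obtain ⟨S, hS, hSX⟩ :=
    exists_isSpecialOrthogonal_of_add_vecMulVec hW hu huu hu'' hu''u'' hX₁.isUnit hdet₁
  refine ⟨S, ⟨hS, hSX⟩, fun T ⟨hT, hTX⟩ => hT.eq_of_mul_eq_mul hS ?_ hkerXT huu hX₁⟩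
  rw [← hTX, ← hSX]

end Field

end Matrix

theorem stmt1 (X Y : Matrix (Fin 3) (Fin 3) ℂ)
    (hW : Xᵀ * X = Yᵀ * Y) (hdet : X.det = Y.det)
    (hker : {v : Fin 3 → ℂ | Xᵀ.mulVec v = 0 ∧ v ⬝ᵥ v = 0} = {0}) :
    ∃! S : Matrix (Fin 3) (Fin 3) ℂ, Sᵀ * S = 1 ∧ S.det = 1 ∧ Y = S * X := by
  have hX : IsAnisotropic (LinearMap.ker Xᵀ.mulVecLin) := fun v hv hvv =>
    hker.subset ⟨hv, hvv⟩
  simp only [← and_assoc]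
  by_cases hdetX : X.det = 0
  · exact existsUnique_isSpecialOrthogonal_of_det_eq_zero hX hW hdetX (hdet ▸ hdetX)
  · exact existsUnique_isSpecialOrthogonal_of_isUnit_det (isUnit_iff_ne_zero.mpr hdetX) hW hdet
end

section
/- Let X be a 3×3 complex matrix with rank X ≥ 2. Then ker(Xᵀ) ∩ im X = ker(Xᵀ) ∩ L, where L = {v ∈ ℂ³ : ⟨v,v⟩ = 0} is the isotropic cone of the standard complex bilinear form. -/
/-!
For any matrix, `im X` is the annihilator of `ker Xᵀ` under the dot product, so a vector of
`ker Xᵀ ∩ im X` is orthogonal to itself. Conversely, when `rank X ≥ 2` the kernel of `Xᵀ` is at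
most a line, so a self-orthogonal `v ∈ ker Xᵀ` is orthogonal to all of `ker Xᵀ`, hence lies in
`im X`.
-/

open Matrix Module

namespace Matrix

variable {K m n : Type*} [Field K] [Fintype m] [Fintype n]

theorem mem_range_mulVecLin_iff (X : Matrix m n K) (v : m → K) :
    v ∈ LinearMap.range X.mulVecLin ↔ ∀ u, Xᵀ *ᵥ u = 0 → u ⬝ᵥ v = 0 := by
  classical
  rw [← Subspace.dualAnnihilator_dualCoannihilator_eq (W := LinearMap.range X.mulVecLin),
    ← LinearMap.ker_dualMap_eq_dualAnnihilator_range, Submodule.mem_dualCoannihilator,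
    (dotProductEquiv K m).surjective.forall]
  refine forall_congr' fun u => imp_congr_left ?_
  rw [LinearMap.mem_ker, ← dotProduct_eq_zero_iff, LinearMap.ext_iff]
  refine forall_congr' fun w => ?_
  rw [dotProduct_comm (Xᵀ *ᵥ u), dotProduct_transpose_mulVec]
  rfl

theorem finrank_ker_mulVecLin_transpose_add_rank (X : Matrix m n K) :
    finrank K (LinearMap.ker Xᵀ.mulVecLin) + X.rank = Fintype.card m := by
  rw [← rank_transpose, rank, add_comm, LinearMap.finrank_range_add_finrank_ker,
    finrank_fintype_fun_eq_card]

end Matrix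

theorem Submodule.exists_smul_eq_of_finrank_le_one {K V : Type*} [DivisionRing K]
    [AddCommGroup V] [Module K V] [FiniteDimensional K V] {W : Submodule K V}
    (hW : finrank K W ≤ 1) {u v : V} (hu : u ∈ W) (hv : v ∈ W) (hv0 : v ≠ 0) :
    ∃ c : K, c • v = u := by
  have hW1 : finrank K W = 1 :=
    hW.antisymm (Submodule.one_le_finrank_iff.2 ((Submodule.ne_bot_iff W).2 ⟨v, hv, hv0⟩))
  rw [← Submodule.mem_span_singleton, ← eq_span_singleton_of_mem_of_finrank_eq_one hW1 hv hv0]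
  exact hu

theorem stmt3 (X : Matrix (Fin 3) (Fin 3) ℂ) (hrank : 2 ≤ X.rank) :
    {v : Fin 3 → ℂ | Xᵀ.mulVec v = 0 ∧ v ∈ LinearMap.range (X.mulVecLin)} =
      {v : Fin 3 → ℂ | Xᵀ.mulVec v = 0 ∧ v ⬝ᵥ v = 0} := by
  have hker : finrank ℂ (LinearMap.ker Xᵀ.mulVecLin) ≤ 1 := by
    have := X.finrank_ker_mulVecLin_transpose_add_rank
    simp only [Fintype.card_fin] at this
    omega
  ext v
  simp only [Set.mem_ofPred_eq, and_congr_right_iff, X.mem_range_mulVecLin_iff]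
  intro hv
  refine ⟨fun h => h v hv, fun hvv u hu => ?_⟩
  rcases eq_or_ne v 0 with rfl | hv0
  · exact dotProduct_zero u
  obtain ⟨c, rfl⟩ := Submodule.exists_smul_eq_of_finrank_le_one hker hu hv hv0
  rw [smul_dotProduct, hvv, smul_zero]
end

section
/- Let P₁, P₂, P₃ ∈ SL(2,ℂ) and set P₀ = Id. Form the 4×4 complex matrix T with entries T_{ij} = ⟨Pᵢ, Pⱼ⟩ where ⟨x,y⟩ = (1/2)trace(x·adj(y)) (indices 0..3). Then the group generated by P₁, P₂, P₃ is irreducible (i.e., no common eigenline of all elements) if and only if rank T ≥ 3. -/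
/-!
`⟨x, y⟩ = ½ tr(x · adj y)` is the polarization of `det`, a nondegenerate quadratic form on
`M₂(ℂ) ≅ ℂ⁴`, and `T` is the Gram matrix of `Id, P₁, P₂, P₃` for it.

For `ℓ ≠ 0` let `N_ℓ = ℓ ⊗ ℓ^⊥`. Since `2⟨A, N_ℓ⟩ = -det(ℓ | Aℓ)`, `ℓ` is an eigenvector of `A`
iff `A ⊥ N_ℓ`; and up to scalars the `N_ℓ` are exactly the nonzero isotropic vectors orthogonal
to `Id` (traceless with zero determinant). So the group is reducible iff the orthogonal complement
of `Id, P₁, P₂, P₃` contains a nonzero isotropic vector.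

For a nondegenerate form on `Kⁿ`, `K` algebraically closed, this happens iff the Gram matrix has
rank at most `n - 2`. If `x ≠ 0` is isotropic and orthogonal to all `Pᵢ`, the Gram map factors
through `y ↦ (⟨Pᵢ, y⟩)ᵢ` on the hyperplane `x^⊥`, which contains the `Pᵢ` and `x` and on which this
map kills `x`. Conversely, small Gram rank either makes the span of the `Pᵢ` meet its complement,
or makes the complement at least two-dimensional, and over an algebraically closed field every
plane contains an isotropic line.
-/

open Matrix Module
open scoped Kronecker

theorem Submodule.finrank_map_add_finrank_inf_ker {K V V₂ : Type*} [Field K] [AddCommGroup V]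
    [Module K V] [AddCommGroup V₂] [Module K V₂] (g : V →ₗ[K] V₂) (W : Submodule K V)
    [FiniteDimensional K W] :
    finrank K (W.map g) + finrank K ↥(W ⊓ LinearMap.ker g) = finrank K W := by
  have := (g.domRestrict W).finrank_range_add_finrank_ker
  rwa [LinearMap.range_domRestrict, LinearMap.ker_domRestrict,
    ← Submodule.finrank_map_subtype_eq, Submodule.map_comap_subtype] at this

theorem exists_quadratic_eq_zero_of_isAlgClosed {K : Type*} [Field K] [IsAlgClosed K] {a : K}
    (b c : K) (ha : a ≠ 0) : ∃ t, a * t ^ 2 + b * t + c = 0 := by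
  open Polynomial in
  obtain ⟨t, ht⟩ := IsAlgClosed.exists_root (C a * X ^ 2 + C b * X + C c)
    (by rw [degree_quadratic ha]; decide)
  exact ⟨t, by simpa using ht⟩

theorem Matrix.mul_mul_transpose_apply {m n R : Type*} [Fintype n] [CommSemiring R]
    (M : Matrix m n R) (J : Matrix n n R) (i j : m) : (M * J * Mᵀ) i j = M i ⬝ᵥ J *ᵥ M j := by
  rw [dotProduct_mulVec]
  rfl

section GramRank

variable {K : Type*} [Field K] {m n : Type*} [Fintype m] [Fintype n]

theorem Submodule.exists_ne_zero_isotropic_of_two_le_finrank [IsAlgClosed K]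
    (J : Matrix n n K) {S : Submodule K (n → K)} (hS : 2 ≤ finrank K S) :
    ∃ x ∈ S, x ≠ 0 ∧ x ⬝ᵥ J *ᵥ x = 0 := by
  obtain ⟨u, huS, hu⟩ := Submodule.exists_mem_ne_zero_of_ne_bot
    (Submodule.one_le_finrank_iff.mp (by omega) : S ≠ ⊥)
  by_cases hqu : u ⬝ᵥ J *ᵥ u = 0
  · exact ⟨u, huS, hu, hqu⟩
  obtain ⟨⟨v, hvS⟩, huv⟩ := exists_linearIndependent_pair_of_one_lt_finrank (M := S) hS
    (x := ⟨u, huS⟩) (by simpa using hu)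
  obtain ⟨t, ht⟩ := exists_quadratic_eq_zero_of_isAlgClosed
    (u ⬝ᵥ J *ᵥ v + v ⬝ᵥ J *ᵥ u) (v ⬝ᵥ J *ᵥ v) hqu
  refine ⟨t • u + v, S.add_mem (S.smul_mem t huS) hvS, fun h ↦ ?_, ?_⟩
  · exact one_ne_zero (LinearIndependent.pair_iff.mp huv t 1 (Subtype.ext (by simpa using h))).2
  · rw [← ht]
    simp only [mulVec_add, mulVec_smul, dotProduct_add, add_dotProduct, smul_dotProduct,
      dotProduct_smul, smul_eq_mul]
    ring

theorem Matrix.rank_mul_mul_transpose_eq_finrank_map (M : Matrix m n K) (J : Matrix n n K) :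
    (M * J * Mᵀ).rank = finrank K ((LinearMap.range Mᵀ.mulVecLin).map (M * J).mulVecLin) := by
  rw [Matrix.rank, mulVecLin_mul, LinearMap.range_comp]

theorem Matrix.rank_mul_mul_transpose_add_two_le_of_isotropic (M : Matrix m n K)
    {J : Matrix n n K} {x : n → K} (hJx : J *ᵥ x ≠ 0) (hMJx : (M * J) *ᵥ x = 0)
    (hx : x ⬝ᵥ J *ᵥ x = 0) : (M * J * Mᵀ).rank + 2 ≤ Fintype.card n := by
  set H := LinearMap.ker (dotProductBilin K K (J *ᵥ x))
  have hmem : ∀ y, y ∈ H ↔ y ⬝ᵥ J *ᵥ x = 0 := fun y ↦ by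
    simp [H, dotProductBilin, dotProduct_comm]
  have hH : H ≠ ⊤ := fun h ↦ hJx <| dotProduct_eq_zero _ fun y ↦ by
    rw [dotProduct_comm, ← hmem, h]; trivial
  have hrange : LinearMap.range Mᵀ.mulVecLin ≤ H := by
    rintro _ ⟨y, rfl⟩
    rw [hmem, mulVecLin_apply, mulVec_transpose, ← dotProduct_mulVec, mulVec_mulVec, hMJx,
      dotProduct_zero]
  have hker : 1 ≤ finrank K ↥(H ⊓ LinearMap.ker (M * J).mulVecLin) :=
    Submodule.one_le_finrank_iff.mpr <| Submodule.ne_bot_iff _ |>.mpr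
      ⟨x, ⟨(hmem x).mpr hx, hMJx⟩, fun h ↦ hJx (by simp [h])⟩
  have := Submodule.finrank_map_add_finrank_inf_ker (M * J).mulVecLin H
  have := Submodule.finrank_mono (Submodule.map_mono (f := (M * J).mulVecLin) hrange)
  have := Submodule.finrank_lt hH
  rw [finrank_fintype_fun_eq_card] at this
  rw [rank_mul_mul_transpose_eq_finrank_map]
  omega

theorem Matrix.exists_isotropic_of_rank_mul_mul_transpose_add_two_le [IsAlgClosed K]
    (M : Matrix m n K) (J : Matrix n n K) (h : (M * J * Mᵀ).rank + 2 ≤ Fintype.card n) :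
    ∃ x ≠ 0, (M * J) *ᵥ x = 0 ∧ x ⬝ᵥ J *ᵥ x = 0 := by
  set W := LinearMap.range Mᵀ.mulVecLin
  set g := (M * J).mulVecLin
  by_cases hW : W ⊓ LinearMap.ker g = ⊥
  · have hWg := Submodule.finrank_map_add_finrank_inf_ker g W
    rw [hW, finrank_bot, ← rank_mul_mul_transpose_eq_finrank_map] at hWg
    have hWM : finrank K W = M.rank := rank_transpose M
    have hg := g.finrank_range_add_finrank_ker
    rw [finrank_fintype_fun_eq_card] at hg
    have hMJ : finrank K (LinearMap.range g) ≤ M.rank := rank_mul_le_left M J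
    obtain ⟨x, hxker, hx0, hx⟩ :=
      Submodule.exists_ne_zero_isotropic_of_two_le_finrank J (S := LinearMap.ker g) (by omega)
    exact ⟨x, hx0, hxker, hx⟩
  · obtain ⟨_, ⟨⟨y, rfl⟩, hker⟩, hx0⟩ := (Submodule.ne_bot_iff _).mp hW
    refine ⟨_, hx0, hker, ?_⟩
    have hMJx : (M * J) *ᵥ (Mᵀ *ᵥ y) = 0 := hker
    rw [mulVecLin_apply, mulVec_transpose, ← dotProduct_mulVec, mulVec_mulVec,
      ← mulVec_transpose, hMJx, dotProduct_zero]

theorem Matrix.rank_mul_mul_transpose_add_two_le_iff [DecidableEq n] [IsAlgClosed K]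
    (M : Matrix m n K) {J : Matrix n n K} (hJ : IsUnit J) :
    (M * J * Mᵀ).rank + 2 ≤ Fintype.card n ↔ ∃ x ≠ 0, (M * J) *ᵥ x = 0 ∧ x ⬝ᵥ J *ᵥ x = 0 :=
  ⟨exists_isotropic_of_rank_mul_mul_transpose_add_two_le M J, fun ⟨_, hx0, hMJx, hx⟩ ↦
    rank_mul_mul_transpose_add_two_le_of_isotropic M
      (by simpa using (mulVec_injective_iff_isUnit.mpr hJ).ne hx0) hMJx hx⟩

end GramRank

def Matrix.SpecialLinearGroup.lineStabilizer {n K : Type*} [Fintype n] [DecidableEq n] [Field K]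
    (ℓ : n → K) : Subgroup (SpecialLinearGroup n K) where
  carrier := {g | ∃ μ : K, (g : Matrix n n K) *ᵥ ℓ = μ • ℓ}
  one_mem' := ⟨1, by simp⟩
  mul_mem' := by
    rintro g h ⟨μ, hμ⟩ ⟨ν, hν⟩
    exact ⟨μ * ν, by rw [SpecialLinearGroup.coe_mul, ← mulVec_mulVec, hν, mulVec_smul, hμ,
      smul_smul, mul_comm]⟩
  inv_mem' := by
    rintro g ⟨μ, hμ⟩
    have h : μ • ((g⁻¹ : SpecialLinearGroup n K) : Matrix n n K) *ᵥ ℓ = ℓ := by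
      rw [← mulVec_smul, ← hμ, mulVec_mulVec, ← SpecialLinearGroup.coe_mul, inv_mul_cancel,
        SpecialLinearGroup.coe_one, one_mulVec]
    refine ⟨μ⁻¹, ?_⟩
    rcases eq_or_ne μ 0 with rfl | hμ0
    · rw [zero_smul] at h
      simp [← h]
    · rw [eq_inv_smul_iff₀ hμ0, h]

theorem Matrix.SpecialLinearGroup.mem_lineStabilizer {n K : Type*} [Fintype n] [DecidableEq n]
    [Field K] {ℓ : n → K} {g : SpecialLinearGroup n K} :
    g ∈ lineStabilizer ℓ ↔ ∃ μ : K, (g : Matrix n n K) *ᵥ ℓ = μ • ℓ :=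
  Iff.rfl

section TwoByTwo

variable {K : Type*} [Field K]

def adjPairing (A C : Matrix (Fin 2) (Fin 2) K) : K := (1 / 2 : K) * (A * C.adjugate).trace

def lineNilpotent (ℓ : Fin 2 → K) : Matrix (Fin 2) (Fin 2) K := vecMulVec ℓ ![-ℓ 1, ℓ 0]

variable (K) in
def adjPairingMatrix : Matrix (Fin 2 × Fin 2) (Fin 2 × Fin 2) K :=
  (1 / 2 : K) • (!![0, 1; -1, 0] ⊗ₖ !![0, 1; -1, 0])

theorem adjPairing_one_left (N : Matrix (Fin 2) (Fin 2) K) : adjPairing 1 N = N.trace / 2 := by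
  simp [adjPairing, adjugate_fin_two, trace_fin_two]; ring

theorem adjPairing_self [NeZero (2 : K)] (N : Matrix (Fin 2) (Fin 2) K) :
    adjPairing N N = N.det := by
  simp [adjPairing, adjugate_fin_two, trace_fin_two, det_fin_two, mul_apply]
  field_simp
  ring

theorem adjPairing_smul_right (A N : Matrix (Fin 2) (Fin 2) K) (c : K) :
    adjPairing A (c • N) = c * adjPairing A N := by
  simp [adjPairing, adjugate_fin_two, trace_fin_two, mul_apply]; ring

theorem adjPairing_eq_vec_dotProduct (A C : Matrix (Fin 2) (Fin 2) K) :
    adjPairing A C = vec A ⬝ᵥ adjPairingMatrix K *ᵥ vec C := by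
  simp [adjPairing, adjPairingMatrix, vec, dotProduct, mulVec, Fintype.sum_prod_type,
    adjugate_fin_two, trace_fin_two, mul_apply]
  ring

theorem isUnit_adjPairingMatrix [NeZero (2 : K)] : IsUnit (adjPairingMatrix K) := by
  simp [isUnit_iff_isUnit_det, adjPairingMatrix, det_kronecker, det_fin_two, two_ne_zero]

theorem exists_eq_smul_iff_mul_eq_mul {ℓ : Fin 2 → K} (hℓ : ℓ ≠ 0) {v : Fin 2 → K} :
    (∃ μ : K, v = μ • ℓ) ↔ ℓ 0 * v 1 = ℓ 1 * v 0 := by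
  refine ⟨fun ⟨μ, hμ⟩ ↦ by simp [hμ]; ring, fun h ↦ ?_⟩
  by_cases h0 : ℓ 0 = 0
  · have h1 : ℓ 1 ≠ 0 := fun h1 ↦ hℓ (by ext i; fin_cases i <;> simp [h0, h1])
    refine ⟨v 1 / ℓ 1, ?_⟩
    ext i; fin_cases i
    · simp only [Fin.zero_eta, Fin.isValue, Pi.smul_apply, smul_eq_mul, h0, mul_zero]
      simpa [h0, h1] using h.symm
    · simp [h1]
  · refine ⟨v 0 / ℓ 0, ?_⟩
    ext i; fin_cases i
    · simp [h0]
    · simp only [Fin.mk_one, Fin.isValue, Pi.smul_apply, smul_eq_mul]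
      field_simp
      linear_combination h

theorem adjPairing_lineNilpotent (A : Matrix (Fin 2) (Fin 2) K) (ℓ : Fin 2 → K) :
    adjPairing A (lineNilpotent ℓ) = (ℓ 1 * (A *ᵥ ℓ) 0 - ℓ 0 * (A *ᵥ ℓ) 1) / 2 := by
  simp [adjPairing, lineNilpotent, adjugate_fin_two, trace_fin_two, mul_apply, mulVec, dotProduct]
  ring

theorem adjPairing_lineNilpotent_eq_zero_iff [NeZero (2 : K)] (A : Matrix (Fin 2) (Fin 2) K)
    {ℓ : Fin 2 → K} (hℓ : ℓ ≠ 0) :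
    adjPairing A (lineNilpotent ℓ) = 0 ↔ ∃ μ : K, A *ᵥ ℓ = μ • ℓ := by
  rw [exists_eq_smul_iff_mul_eq_mul hℓ, adjPairing_lineNilpotent, div_eq_zero_iff,
    or_iff_left two_ne_zero, sub_eq_zero, eq_comm]

theorem det_lineNilpotent (ℓ : Fin 2 → K) : (lineNilpotent ℓ).det = 0 := by
  simp [lineNilpotent, det_fin_two]; ring

theorem lineNilpotent_ne_zero {ℓ : Fin 2 → K} (hℓ : ℓ ≠ 0) : lineNilpotent ℓ ≠ 0 := by
  intro h
  have h0 : ℓ 0 * ℓ 0 = 0 := by simpa [lineNilpotent] using congr_fun₂ h 0 1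
  have h1 : ℓ 1 * ℓ 1 = 0 := by simpa [lineNilpotent] using congr_fun₂ h 1 0
  exact hℓ (by ext i; fin_cases i <;> simp_all)

theorem exists_lineNilpotent_eq_smul {N : Matrix (Fin 2) (Fin 2) K} (hN : N ≠ 0)
    (htr : N.trace = 0) (hdet : N.det = 0) : ∃ ℓ ≠ 0, ∃ c : K, lineNilpotent ℓ = c • N := by
  have hd : N 1 1 = -N 0 0 := by linear_combination (trace_fin_two N).symm.trans htr
  have hbc : N 0 1 * N 1 0 = -(N 0 0 * N 0 0) := by
    linear_combination N 0 0 * hd - (det_fin_two N).symm.trans hdet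
  by_cases hb : N 0 1 = 0
  · have ha : N 0 0 = 0 := mul_self_eq_zero.mp <| by simpa [hb] using hbc.symm
    have hc : N 1 0 ≠ 0 := fun hc ↦ hN (by ext i j; fin_cases i <;> fin_cases j <;> simp_all)
    refine ⟨![0, 1], by simp, -(N 1 0)⁻¹, ?_⟩
    ext i j; fin_cases i <;> fin_cases j <;> simp [lineNilpotent, ha, hb, hc, hd]
  · refine ⟨![N 0 1, -N 0 0], by simp [hb], N 0 1, ?_⟩
    ext i j; fin_cases i <;> fin_cases j <;> simp [lineNilpotent, hd, hbc, mul_comm]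

theorem exists_common_eigenvector_iff [NeZero (2 : K)] {ι : Type*}
    (w : ι → Matrix (Fin 2) (Fin 2) K) {i₀ : ι} (hi₀ : w i₀ = 1) :
    (∃ ℓ ≠ 0, ∀ i, ∃ μ : K, w i *ᵥ ℓ = μ • ℓ) ↔
      ∃ N ≠ 0, N.det = 0 ∧ ∀ i, adjPairing (w i) N = 0 := by
  constructor
  · rintro ⟨ℓ, hℓ, heig⟩
    exact ⟨lineNilpotent ℓ, lineNilpotent_ne_zero hℓ, det_lineNilpotent ℓ,
      fun i ↦ (adjPairing_lineNilpotent_eq_zero_iff _ hℓ).mpr (heig i)⟩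
  · rintro ⟨N, hN0, hdet, hperp⟩
    have htr : N.trace = 0 := by
      simpa [hi₀, adjPairing_one_left, two_ne_zero] using hperp i₀
    obtain ⟨ℓ, hℓ, c, hc⟩ := exists_lineNilpotent_eq_smul hN0 htr hdet
    refine ⟨ℓ, hℓ, fun i ↦ (adjPairing_lineNilpotent_eq_zero_iff _ hℓ).mp ?_⟩
    rw [hc, adjPairing_smul_right, hperp i, mul_zero]

theorem rank_gram_adjPairing_add_two_le_iff [IsAlgClosed K] [NeZero (2 : K)] {ι : Type*}
    [Fintype ι] (w : ι → Matrix (Fin 2) (Fin 2) K) :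
    (of fun i j ↦ adjPairing (w i) (w j)).rank + 2 ≤ 4 ↔
      ∃ N ≠ 0, N.det = 0 ∧ ∀ i, adjPairing (w i) N = 0 := by
  set M : Matrix ι (Fin 2 × Fin 2) K := of fun i ↦ vec (w i)
  have hgram : of (fun i j ↦ adjPairing (w i) (w j)) = M * adjPairingMatrix K * Mᵀ := by
    ext i j
    rw [mul_mul_transpose_apply]
    exact adjPairing_eq_vec_dotProduct _ _
  have hMJ : ∀ N, (M * adjPairingMatrix K) *ᵥ vec N = 0 ↔ ∀ i, adjPairing (w i) N = 0 :=
    fun N ↦ funext_iff.trans <| forall_congr' fun i ↦ by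
      rw [← mulVec_mulVec, adjPairing_eq_vec_dotProduct]
      rfl
  rw [hgram, show 4 = Fintype.card (Fin 2 × Fin 2) from rfl,
    rank_mul_mul_transpose_add_two_le_iff M isUnit_adjPairingMatrix,
    vec_bijective.surjective.exists]
  simp only [ne_eq, vec_eq_zero_iff, hMJ, ← adjPairing_eq_vec_dotProduct, adjPairing_self]
  tauto

end TwoByTwo

theorem stmt10 (P₁ P₂ P₃ : Matrix.SpecialLinearGroup (Fin 2) ℂ) :
    (¬ ∃ ℓ : Fin 2 → ℂ, ℓ ≠ 0 ∧
        ∀ g ∈ Subgroup.closure {P₁, P₂, P₃},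
          ∃ μ : ℂ, (g : Matrix (Fin 2) (Fin 2) ℂ).mulVec ℓ = μ • ℓ) ↔
      3 ≤ (Matrix.of fun i j : Fin 4 =>
        (1/2 : ℂ) *
          (((![1, ↑P₁, ↑P₂, ↑P₃] : Fin 4 → Matrix (Fin 2) (Fin 2) ℂ) i) *
           ((![1, ↑P₁, ↑P₂, ↑P₃] : Fin 4 → Matrix (Fin 2) (Fin 2) ℂ) j).adjugate).trace).rank := by
  set w : Fin 4 → Matrix (Fin 2) (Fin 2) ℂ := ![1, ↑P₁, ↑P₂, ↑P₃]
  have hreducible : (∃ ℓ : Fin 2 → ℂ, ℓ ≠ 0 ∧ ∀ g ∈ Subgroup.closure {P₁, P₂, P₃},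
      ∃ μ : ℂ, (g : Matrix (Fin 2) (Fin 2) ℂ) *ᵥ ℓ = μ • ℓ) ↔
      ∃ ℓ ≠ 0, ∀ i, ∃ μ : ℂ, w i *ᵥ ℓ = μ • ℓ := by
    refine exists_congr fun ℓ ↦ and_congr_right fun _ ↦ ?_
    change Subgroup.closure _ ≤ SpecialLinearGroup.lineStabilizer ℓ ↔ _
    rw [Subgroup.closure_le, Set.insert_subset_iff, Set.insert_subset_iff,
      Set.singleton_subset_iff]
    simp only [SetLike.mem_coe, SpecialLinearGroup.mem_lineStabilizer, Fin.forall_fin_succ,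
      IsEmpty.forall_iff, and_true]
    exact ⟨fun ⟨h₁, h₂, h₃⟩ ↦ ⟨⟨1, by simp [w]⟩, h₁, h₂, h₃⟩, fun ⟨_, h₁, h₂, h₃⟩ ↦ ⟨h₁, h₂, h₃⟩⟩
  change _ ↔ 3 ≤ (of fun i j ↦ adjPairing (w i) (w j)).rank
  rw [hreducible, exists_common_eigenvector_iff w (i₀ := 0) rfl,
    ← rank_gram_adjPairing_add_two_le_iff]
  omega
end
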